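/- arXiv:2604.21302 — 3 statements merged into one kernel-verified Lean document; each statement's English description precedes it below -/
import Mathlib

section
/- Let P, P̃ be symmetric positive semidefinite n×n matrices with P ⪯ P̃, H an m×n matrix, R a symmetric positive definite m×m matrix, and define g(P) = P Hᵀ (H P Hᵀ + R)⁻¹ H P. If v is a vector with P v = P̃ v =: w, then vᵀ g(P) v ≥ vᵀ g(P̃) v. -/
/-!
Since `P` and `P̃` are symmetric and both send `v` to `w`, the two quadratic forms are
`(H w)ᵀ S⁻¹ (H w)` and `(H w)ᵀ S̃⁻¹ (H w)` with `S = H P Hᵀ + R ⪯ S̃ = H P̃ Hᵀ + R`.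
Inversion reverses the Loewner order on positive definite matrices, which is seen by
completing the square.
-/

open Matrix

namespace Matrix

variable {ι κ : Type*} [Fintype ι] [Fintype κ]

theorem IsSymm.dotProduct_mulVec_comm {R : Type*} [CommSemiring R] {B : Matrix ι ι R}
    (hB : B.IsSymm) (x y : ι → R) : x ⬝ᵥ B *ᵥ y = B *ᵥ x ⬝ᵥ y := by
  rw [dotProduct_mulVec, ← mulVec_transpose, hB.eq]

theorem IsSymm.dotProduct_mulVec_mul_transpose_mul_mul_mul {R : Type*} [CommSemiring R]
    {P : Matrix ι ι R} (hP : P.IsSymm) (H : Matrix κ ι R) (B : Matrix κ κ R) (v : ι → R) :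
    v ⬝ᵥ (P * Hᵀ * B * H * P) *ᵥ v = H *ᵥ P *ᵥ v ⬝ᵥ B *ᵥ H *ᵥ P *ᵥ v := by
  have hHP : P * Hᵀ = (H * P)ᵀ := by rw [transpose_mul, hP.eq]
  rw [hHP, Matrix.mul_assoc _ H, ← mulVec_mulVec, ← mulVec_mulVec, dotProduct_mulVec,
    vecMul_transpose]
  simp only [mulVec_mulVec]

theorem PosDef.dotProduct_inv_mulVec_le [DecidableEq ι] {B B' : Matrix ι ι ℝ} (hB : B.PosDef)
    (hle : (B' - B).PosSemidef) (x : ι → ℝ) : x ⬝ᵥ B'⁻¹ *ᵥ x ≤ x ⬝ᵥ B⁻¹ *ᵥ x := by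
  have hB' : B'.PosDef := by simpa using hB.add_posSemidef hle
  have hBsymm : B.IsSymm := isHermitian_iff_isSymm.mp hB.isHermitian
  set a := B⁻¹ *ᵥ x
  set b := B'⁻¹ *ᵥ x
  have hBa : B *ᵥ a = x := by
    rw [mulVec_mulVec, mul_nonsing_inv _ (B.isUnit_iff_isUnit_det.mp hB.isUnit), one_mulVec]
  have hB'b : B' *ᵥ b = x := by
    rw [mulVec_mulVec, mul_nonsing_inv _ (B'.isUnit_iff_isUnit_det.mp hB'.isUnit), one_mulVec]
  -- completing the square: `(a - b)ᵀ B (a - b) + bᵀ (B' - B) b = xᵀ a - xᵀ b`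
  have hsquare : (a - b) ⬝ᵥ B *ᵥ (a - b) + b ⬝ᵥ (B' - B) *ᵥ b = x ⬝ᵥ a - x ⬝ᵥ b := by
    simp only [sub_mulVec, mulVec_sub, sub_dotProduct, dotProduct_sub, hB'b]
    rw [hBsymm.dotProduct_mulVec_comm a, hBsymm.dotProduct_mulVec_comm a, hBa,
      dotProduct_comm b x]
    ring
  have h₁ := hB.posSemidef.dotProduct_mulVec_nonneg (a - b)
  have h₂ := hle.dotProduct_mulVec_nonneg b
  simp only [star_trivial] at h₁ h₂
  linarith

end Matrix

/-- Kernel comparison for the Kalman covariance jump map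
`g(P) = P Hᵀ (H P Hᵀ + R)⁻¹ H P`: if `P ⪯ P̃` and `P v = P̃ v = w`,
then `vᵀ g(P) v ≥ vᵀ g(P̃) v`. -/
theorem jump_map_kernel_comparison {n m : ℕ}
    (P Pt : Matrix (Fin n) (Fin n) ℝ) (hP : P.PosSemidef) (hPt : Pt.PosSemidef)
    (hle : (Pt - P).PosSemidef)
    (H : Matrix (Fin m) (Fin n) ℝ) (R : Matrix (Fin m) (Fin m) ℝ) (hR : R.PosDef)
    (v w : Fin n → ℝ) (hPv : P.mulVec v = w) (hPtv : Pt.mulVec v = w) :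
    v ⬝ᵥ (Pt * Hᵀ * (H * Pt * Hᵀ + R)⁻¹ * H * Pt).mulVec v ≤
      v ⬝ᵥ (P * Hᵀ * (H * P * Hᵀ + R)⁻¹ * H * P).mulVec v := by
  have hS : (H * P * Hᵀ + R).PosDef := by
    simpa using PosDef.posSemidef_add (hP.mul_mul_conjTranspose_same H) hR
  have hSle : ((H * Pt * Hᵀ + R) - (H * P * Hᵀ + R)).PosSemidef := by
    simpa [Matrix.mul_sub, Matrix.sub_mul] using hle.mul_mul_conjTranspose_same H
  rw [(isHermitian_iff_isSymm.mp hP.isHermitian).dotProduct_mulVec_mul_transpose_mul_mul_mul,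
    (isHermitian_iff_isSymm.mp hPt.isHermitian).dotProduct_mulVec_mul_transpose_mul_mul_mul,
    hPv, hPtv]
  exact hS.dotProduct_inv_mulVec_le hSle (H *ᵥ w)
end

section
/- Let E be a symmetric n×n matrix with E ⪯ 0, and let Z be symmetric with vᵀ Z v ≤ 0 for all v ∈ ker E. Then for all sufficiently small h > 0, the distance from E + hZ to the negative semidefinite cone is o(h); equivalently, Z lies in the (Bouligand) tangent cone to S₋ⁿ at E. -/
/-!
Since `Z - δ • 1` is negative definite on `ker E`, a compactness argument on the unit sphere
shows `E + h • (Z - δ • 1) ⪯ 0` for all small `h > 0`: near a unit vector outside `ker E` the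
term `xᵀ E x < 0` dominates, near one inside `ker E` the term `h • xᵀ (Z - δ • 1) x < 0`
does.
So the distance from `E + h • Z` to the cone is at most `h δ ‖1‖`, for every `δ > 0`.
-/

open Matrix Set Asymptotics

noncomputable def frobNorm {n : ℕ} (M : Matrix (Fin n) (Fin n) ℝ) : ℝ :=
  Real.sqrt (∑ i, ∑ j, (M i j) ^ 2)

open Filter Topology

namespace Matrix

variable {ι : Type*} [Fintype ι]

theorem posSemidef_neg_iff_dotProduct_mulVec_nonpos {A : Matrix ι ι ℝ} :
    (-A).PosSemidef ↔ A.IsSymm ∧ ∀ x, x ⬝ᵥ A *ᵥ x ≤ 0 := by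
  simp [posSemidef_iff_dotProduct_mulVec, neg_mulVec]

theorem smul_dotProduct_mulVec_smul (A : Matrix ι ι ℝ) (c : ℝ) (x : ι → ℝ) :
    (c • x) ⬝ᵥ A *ᵥ (c • x) = c ^ 2 * (x ⬝ᵥ A *ᵥ x) := by
  simp only [mulVec_smul, dotProduct_smul, smul_dotProduct, smul_eq_mul]; ring

theorem eventually_nhds_dotProduct_add_smul_mulVec_nonpos {E Y : Matrix ι ι ℝ}
    (hE : (-E).PosSemidef) (hY : ∀ v ≠ 0, E *ᵥ v = 0 → v ⬝ᵥ Y *ᵥ v < 0)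
    {x : ι → ℝ} (hx : x ≠ 0) :
    ∀ᶠ p : ℝ × (ι → ℝ) in 𝓝 (0, x), 0 ≤ p.1 → p.2 ⬝ᵥ (E + p.1 • Y) *ᵥ p.2 ≤ 0 := by
  have hE' := (posSemidef_neg_iff_dotProduct_mulVec_nonpos.mp hE).2
  by_cases hEx : E *ᵥ x = 0
  · have hYx : ∀ᶠ p : ℝ × (ι → ℝ) in 𝓝 (0, x), p.2 ⬝ᵥ Y *ᵥ p.2 < 0 :=
      (show Continuous fun p : ℝ × (ι → ℝ) => p.2 ⬝ᵥ Y *ᵥ p.2 by fun_prop).continuousAt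
        |>.eventually_lt continuousAt_const (hY x hx hEx)
    filter_upwards [hYx] with p hp hp1
    rw [add_mulVec, dotProduct_add, smul_mulVec, dotProduct_smul, smul_eq_mul]
    nlinarith [hE' p.2]
  · have hEx' : x ⬝ᵥ E *ᵥ x < 0 := by
      refine (hE' x).lt_of_ne fun h => hEx ?_
      simpa [neg_mulVec, h] using hE.dotProduct_mulVec_zero_iff x
    have hcont : Continuous fun p : ℝ × (ι → ℝ) => p.2 ⬝ᵥ (E + p.1 • Y) *ᵥ p.2 := by
      fun_prop
    filter_upwards [hcont.continuousAt.eventually_lt continuousAt_const (by simpa using hEx')]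
      with p hp _
    exact hp.le

theorem eventually_posSemidef_neg_add_smul {E Y : Matrix ι ι ℝ} (hE : (-E).PosSemidef)
    (hY : Y.IsSymm) (hYker : ∀ v ≠ 0, E *ᵥ v = 0 → v ⬝ᵥ Y *ᵥ v < 0) :
    ∀ᶠ h : ℝ in 𝓝[>] 0, (-(E + h • Y)).PosSemidef := by
  have hEsymm := (posSemidef_neg_iff_dotProduct_mulVec_nonpos.mp hE).1
  have hsphere : ∀ᶠ h in 𝓝 (0 : ℝ), ∀ x ∈ Metric.sphere (0 : ι → ℝ) 1,
      0 ≤ h → x ⬝ᵥ (E + h • Y) *ᵥ x ≤ 0 :=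
    (isCompact_sphere 0 1).eventually_forall_of_forall_eventually fun x hx =>
      eventually_nhds_dotProduct_add_smul_mulVec_nonpos hE hYker
        (ne_zero_of_mem_unit_sphere ⟨x, hx⟩)
  filter_upwards [eventually_nhdsWithin_of_eventually_nhds hsphere, self_mem_nhdsWithin]
    with h hh (hpos : 0 < h)
  refine posSemidef_neg_iff_dotProduct_mulVec_nonpos.mpr
    ⟨hEsymm.add (hY.smul h), fun x => ?_⟩
  rcases eq_or_ne x 0 with rfl | hx
  · simp
  · have hu : ‖x‖⁻¹ • x ∈ Metric.sphere (0 : ι → ℝ) 1 := by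
      simp [norm_smul, hx]
    have hux := hh _ hu hpos.le
    rw [smul_dotProduct_mulVec_smul] at hux
    exact nonpos_of_mul_nonpos_right hux (by positivity)

theorem eventually_posSemidef_neg_add_smul_sub_smul_one [DecidableEq ι]
    {E Z : Matrix ι ι ℝ} (hE : (-E).PosSemidef) (hZ : Z.IsSymm)
    (hker : ∀ v, E *ᵥ v = 0 → v ⬝ᵥ Z *ᵥ v ≤ 0)
    {δ : ℝ} (hδ : 0 < δ) :
    ∀ᶠ h : ℝ in 𝓝[>] 0, (-(E + h • (Z - δ • 1))).PosSemidef := by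
  refine eventually_posSemidef_neg_add_smul hE (hZ.sub (isSymm_one.smul δ)) fun v hv hEv => ?_
  have hvv : 0 < v ⬝ᵥ v := by simpa using dotProduct_self_star_pos_iff.mpr hv
  rw [sub_mulVec, dotProduct_sub, smul_mulVec, one_mulVec, dotProduct_smul, smul_eq_mul]
  nlinarith [hker v hEv]

end Matrix

lemma frobNorm_nonneg {n : ℕ} (M : Matrix (Fin n) (Fin n) ℝ) : 0 ≤ frobNorm M :=
  Real.sqrt_nonneg _

lemma frobNorm_smul {n : ℕ} (c : ℝ) (M : Matrix (Fin n) (Fin n) ℝ) :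
    frobNorm (c • M) = |c| * frobNorm M := by
  simp only [frobNorm, Matrix.smul_apply, smul_eq_mul, mul_pow, ← Finset.mul_sum]
  rw [Real.sqrt_mul (sq_nonneg c), Real.sqrt_sq_eq_abs]

/-- Bouligand tangent cone characterization for the NSD cone: if `E ⪯ 0` is
symmetric and `Z` is symmetric with `vᵀ Z v ≤ 0` for all `v ∈ ker E`, then the
(Frobenius) distance from `E + hZ` to the NSD cone is `o(h)` as `h → 0⁺`. -/
theorem tangent_cone_little_o {n : ℕ}
    (E Z : Matrix (Fin n) (Fin n) ℝ)
    (hE : (-E).PosSemidef) (hZ : Z.IsSymm)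
    (hker : ∀ v : Fin n → ℝ, E.mulVec v = 0 → v ⬝ᵥ Z.mulVec v ≤ 0) :
    (fun h : ℝ =>
        sInf ((fun N => frobNorm (E + h • Z - N)) ''
          {N : Matrix (Fin n) (Fin n) ℝ | (-N).PosSemidef}))
      =o[nhdsWithin 0 (Ioi 0)] (fun h => h) := by
  rw [isLittleO_iff]
  intro ε hε
  set C := frobNorm (1 : Matrix (Fin n) (Fin n) ℝ)
  set δ := ε / (C + 1)
  have hC : 0 ≤ C := frobNorm_nonneg _
  have hδ : 0 < δ := by positivity
  filter_upwards [eventually_posSemidef_neg_add_smul_sub_smul_one hE hZ hker hδ,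
    self_mem_nhdsWithin] with h hN (hh : 0 < h)
  have hdist : sInf ((fun N => frobNorm (E + h • Z - N)) ''
      {N : Matrix (Fin n) (Fin n) ℝ | (-N).PosSemidef}) ≤ h * δ * C :=
    calc _ ≤ frobNorm (E + h • Z - (E + h • (Z - δ • 1))) :=
          csInf_le ⟨0, forall_mem_image.2 fun _ _ => frobNorm_nonneg _⟩ (mem_image_of_mem _ hN)
      _ = h * δ * C := by
          rw [show E + h • Z - (E + h • (Z - δ • 1)) = (h * δ) • 1 by module, frobNorm_smul,
            abs_of_pos (by positivity)]
  have hδC : δ * C ≤ ε := by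
    rw [div_mul_eq_mul_div, div_le_iff₀ (by positivity)]
    nlinarith
  rw [Real.norm_of_nonneg hh.le,
    Real.norm_of_nonneg (Real.sInf_nonneg (forall_mem_image.2 fun _ _ => frobNorm_nonneg _))]
  nlinarith
end

section
/- Let A be an n×n matrix, Q ⪰ 0 symmetric, S : [0,T] → symmetric PSD matrices continuous, and let Ỹ, Ȳ : [0,T] → symmetric positive definite matrices be C¹ solutions of d/dt Ỹ = −ỸA − AᵀỸ − ỸQỸ + S(t) and d/dt Ȳ = −ȲA − AᵀȲ − ȲQȲ + S(t) − Δ(t), where Δ : [0,T] → symmetric PSD matrices is continuous, with Ỹ(0) = Ȳ(0). Then Ỹ(t) ⪰ Ȳ(t) for all t ∈ [0,T]. -/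
/-!
Writing `E = Ỹ - Ȳ` and `M = (Ỹ + Ȳ) / 2`, the quadratic terms combine as
`ỸQỸ - ȲQȲ = EQM + MQE`, so `E` solves the Lyapunov equation `Ė = -EB - BᵀE + Δ` with
`B = A + QM` and `E(0) = 0`. Such an equation keeps `E` positive semidefinite: the perturbation
`E + ε e^{Kt} I` is positive definite at `t = 0`, and at a first time where it acquires a kernel
vector `x`, the forcing `Δ ⪰ 0` together with `e^{Kt}` growing faster than `|xᵀBx|` makes the
quadratic form in `x` strictly increasing, although it has just decreased to `0`. Letting
`ε → 0` gives `E ⪰ 0`.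
-/

open Matrix Set Filter Topology

theorem HasDerivWithinAt.nonpos_of_forall_Ico_le {g : ℝ → ℝ} {g' a t : ℝ}
    (hg : HasDerivWithinAt g g' (Icc a t) t) (hat : a < t) (hle : ∀ s ∈ Ico a t, g t ≤ g s) :
    g' ≤ 0 := by
  have hmin : IsLocalMinOn g (Icc a t) t := by
    refine eventually_of_mem self_mem_nhdsWithin fun s hs => ?_
    rcases hs.2.lt_or_eq with h | rfl
    · exact hle s ⟨hs.1, h⟩
    · exact le_rfl
  have hcone : -(t - a) ∈ posTangentConeAt (Icc a t) t := by
    apply mem_posTangentConeAt_of_segment_subset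
    rw [show t + -(t - a) = a by ring, segment_symm, segment_eq_Icc hat.le]
  have hderiv := hmin.hasFDerivWithinAt_nonneg hg.hasFDerivWithinAt hcone
  simp only [neg_sub, ContinuousLinearMap.toSpanSingleton_apply, smul_eq_mul] at hderiv
  nlinarith

theorem IsCompact.exists_first_zero {X : Type*} [TopologicalSpace X] [T2Space X] {K : Set X}
    (hK : IsCompact K) {G : ℝ → X → ℝ} {a b : ℝ}
    (hG : ContinuousOn (fun p : ℝ × X => G p.1 p.2) (Icc a b ×ˢ K))
    (ha : ∀ x ∈ K, 0 < G a x) (hneg : ∃ t ∈ Icc a b, ∃ x ∈ K, G t x ≤ 0) :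
    ∃ t ∈ Ioc a b, ∃ x ∈ K, G t x = 0 ∧ (∀ y ∈ K, 0 ≤ G t y) ∧
      ∀ s ∈ Ico a t, ∀ y ∈ K, 0 < G s y := by
  set Z := Icc a b ×ˢ K ∩ (fun p : ℝ × X => G p.1 p.2) ⁻¹' Iic 0
  have hZ : IsCompact Z := (isCompact_Icc.prod hK).of_isClosed_subset
    (hG.preimage_isClosed_of_isClosed (isClosed_Icc.prod hK.isClosed) isClosed_Iic)
    inter_subset_left
  obtain ⟨t, ht, x, hx, hneg⟩ := hneg
  obtain ⟨⟨t, x⟩, ⟨⟨ht, hx⟩, hneg⟩, hmin⟩ :=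
    hZ.exists_isMinOn ⟨(t, x), ⟨ht, hx⟩, hneg⟩ continuous_fst.continuousOn
  have hbefore : ∀ s ∈ Ico a t, ∀ y ∈ K, 0 < G s y := fun s hs y hy => by
    by_contra! h
    exact absurd (hmin (show (s, y) ∈ Z from ⟨⟨⟨hs.1, hs.2.le.trans ht.2⟩, hy⟩, h⟩))
      (not_le.2 hs.2)
  have hat : a < t := ht.1.lt_of_ne fun h => (ha x hx).not_ge (h ▸ hneg)
  have hnonneg : ∀ y ∈ K, 0 ≤ G t y := fun y hy => by
    have hcont : ContinuousOn (fun s => G s y) (closure (Ico a t)) := by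
      rw [closure_Ico hat.ne]
      exact hG.comp (continuousOn_id.prodMk continuousOn_const)
        fun s hs => ⟨⟨hs.1, hs.2.trans ht.2⟩, hy⟩
    refine le_on_closure (fun s hs => (hbefore s hs y hy).le) continuousOn_const hcont ?_
    rw [closure_Ico hat.ne]
    exact right_mem_Icc.2 hat.le
  exact ⟨t, ⟨hat, ht.2⟩, x, hx, le_antisymm hneg (hnonneg x hx), hnonneg, hbefore⟩

namespace Matrix

theorem continuousOn_of_forall_hasDerivWithinAt_apply {ι κ : Type*}
    {M M' : ℝ → Matrix ι κ ℝ} {s : Set ℝ}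
    (h : ∀ t ∈ s, ∀ i j, HasDerivWithinAt (fun τ => M τ i j) (M' t i j) s t) :
    ContinuousOn M s :=
  continuousOn_pi.2 fun i => continuousOn_pi.2 fun j t ht => (h t ht i j).continuousWithinAt

theorem hasDerivWithinAt_add_exp_smul_one_apply {ι : Type*} [DecidableEq ι]
    {M : ℝ → Matrix ι ι ℝ} {D : Matrix ι ι ℝ} {s : Set ℝ} {t : ℝ}
    (hM : ∀ i j, HasDerivWithinAt (fun τ => M τ i j) (D i j) s t) (ε K a : ℝ) (i j : ι) :
    HasDerivWithinAt (fun τ => (M τ + (ε * Real.exp (K * (τ - a))) • 1) i j)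
      ((D + (ε * Real.exp (K * (t - a)) * K) • 1) i j) s t := by
  have hexp : HasDerivAt (fun τ => ε * Real.exp (K * (τ - a)))
      (ε * Real.exp (K * (t - a)) * K) t := by
    simpa [mul_assoc] using (((hasDerivAt_id t).sub_const a).const_mul K).exp.const_mul ε
  simpa using (hM i j).fun_add (hexp.hasDerivWithinAt.mul_const ((1 : Matrix ι ι ℝ) i j))

variable {ι : Type*} [Fintype ι]

theorem hasDerivWithinAt_dotProduct_mulVec {κ : Type*} [Fintype κ] {M : ℝ → Matrix ι κ ℝ}
    {M' : Matrix ι κ ℝ} {s : Set ℝ} {t : ℝ}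
    (hM : ∀ i j, HasDerivWithinAt (fun τ => M τ i j) (M' i j) s t) (x : ι → ℝ) (y : κ → ℝ) :
    HasDerivWithinAt (fun τ => x ⬝ᵥ M τ *ᵥ y) (x ⬝ᵥ M' *ᵥ y) s t := by
  simp only [dotProduct, mulVec]
  exact HasDerivWithinAt.fun_sum fun i _ =>
    (HasDerivWithinAt.fun_sum fun j _ => (hM i j).mul_const (y j)).const_mul (x i)

theorem ContinuousOn.dotProduct_mulVec_self {α : Type*} [TopologicalSpace α]
    {M : α → Matrix ι ι ℝ} {s : Set α} (hM : ContinuousOn M s) :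
    ContinuousOn (fun p : α × (ι → ℝ) => p.2 ⬝ᵥ M p.1 *ᵥ p.2) (s ×ˢ univ) :=
  (continuous_snd.dotProduct (continuous_fst.matrix_mulVec continuous_snd)).comp_continuousOn
    ((hM.comp continuousOn_fst fun _ hp => hp.1).prodMk continuousOn_snd)

theorem _root_.IsCompact.exists_bound_dotProduct_mulVec {M : ℝ → Matrix ι ι ℝ} {s : Set ℝ}
    (hs : IsCompact s) (hM : ContinuousOn M s) :
    ∃ C, ∀ t ∈ s, ∀ x : ι → ℝ, ‖x‖ = 1 → |x ⬝ᵥ M t *ᵥ x| ≤ C := by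
  obtain ⟨C, hC⟩ := (hs.prod (isCompact_sphere 0 1)).exists_bound_of_continuousOn
    (hM.dotProduct_mulVec_self.mono (prod_mono subset_rfl (subset_univ _)))
  exact ⟨C, fun t ht x hx => hC (t, x) ⟨ht, by simpa using hx⟩⟩

theorem one_le_dotProduct_self_of_norm_eq_one {x : ι → ℝ} (hx : ‖x‖ = 1) : 1 ≤ x ⬝ᵥ x := by
  obtain ⟨i, hi⟩ : ∃ i, 1 ≤ ‖x i‖ := by
    by_contra! h
    exact ((pi_norm_lt_iff one_pos).2 h).ne hx
  rw [Real.norm_eq_abs] at hi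
  calc 1 ≤ x i * x i := by nlinarith [abs_mul_abs_self (x i)]
    _ ≤ x ⬝ᵥ x := Finset.single_le_sum (f := fun j => x j * x j)
        (fun j _ => mul_self_nonneg _) (Finset.mem_univ i)

theorem PosSemidef.of_forall_norm_eq_one {M : Matrix ι ι ℝ} (hM : M.IsHermitian)
    (h : ∀ x : ι → ℝ, ‖x‖ = 1 → 0 ≤ x ⬝ᵥ M *ᵥ x) : M.PosSemidef := by
  refine .of_dotProduct_mulVec_nonneg hM fun x => ?_
  rcases eq_or_ne x 0 with rfl | hx
  · simp
  have hxn : 0 < ‖x‖ := norm_pos_iff.2 hx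
  have hu := h (‖x‖⁻¹ • x) (by rw [norm_smul, norm_inv, norm_norm, inv_mul_cancel₀ hxn.ne'])
  rw [mulVec_smul, dotProduct_smul, smul_dotProduct, smul_eq_mul, smul_eq_mul, ← mul_assoc] at hu
  simpa using nonneg_of_mul_nonneg_right hu (by positivity)

theorem IsSymm.dotProduct_mul_add_transpose_mul_mulVec {M : Matrix ι ι ℝ} (hM : M.IsSymm)
    (N : Matrix ι ι ℝ) {x : ι → ℝ} {c : ℝ} (hx : M *ᵥ x = c • x) :
    x ⬝ᵥ (M * N + Nᵀ * M) *ᵥ x = 2 * c * (x ⬝ᵥ N *ᵥ x) := by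
  have hxM : x ᵥ* M = c • x := by rw [← mulVec_transpose, hM.eq, hx]
  rw [add_mulVec, dotProduct_add, ← mulVec_mulVec, ← mulVec_mulVec, dotProduct_mulVec,
    hxM, hx, mulVec_transpose, smul_vecMul, dotProduct_smul, smul_dotProduct,
    dotProduct_comm x (x ᵥ* N), ← dotProduct_mulVec]
  simp only [smul_eq_mul]
  ring

variable [DecidableEq ι]

theorem dotProduct_mulVec_add_smul_one (M : Matrix ι ι ℝ) (c : ℝ) (x : ι → ℝ) :
    x ⬝ᵥ (M + c • 1) *ᵥ x = x ⬝ᵥ M *ᵥ x + c * (x ⬝ᵥ x) := by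
  simp only [add_mulVec, smul_mulVec, one_mulVec, dotProduct_add, dotProduct_smul, smul_eq_mul]

theorem IsSymm.dotProduct_lyapunov_mulVec_pos {E B P : Matrix ι ι ℝ} (hE : E.IsSymm)
    (hP : P.PosSemidef) {x : ι → ℝ} {c K : ℝ} (hc : 0 < c) (hx : E *ᵥ x = (-c) • x)
    (hK : 0 < 2 * (x ⬝ᵥ B *ᵥ x) + K * (x ⬝ᵥ x)) :
    0 < x ⬝ᵥ (-(E * B) - Bᵀ * E + P + (c * K) • 1) *ᵥ x := by
  have hPx : 0 ≤ x ⬝ᵥ P *ᵥ x := by simpa using hP.dotProduct_mulVec_nonneg x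
  rw [dotProduct_mulVec_add_smul_one, show -(E * B) - Bᵀ * E + P = P - (E * B + Bᵀ * E) by abel,
    sub_mulVec, dotProduct_sub, hE.dotProduct_mul_add_transpose_mul_mulVec B hx]
  nlinarith

theorem riccati_sub_riccati_eq_lyapunov {A Q Y Z S Δ : Matrix ι ι ℝ} (hQ : Q.IsSymm)
    (hY : Y.IsSymm) (hZ : Z.IsSymm) :
    (-(Y * A) - Aᵀ * Y - Y * Q * Y + S) - (-(Z * A) - Aᵀ * Z - Z * Q * Z + S - Δ) =
      -((Y - Z) * (A + Q * ((2 : ℝ)⁻¹ • (Y + Z)))) -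
        (A + Q * ((2 : ℝ)⁻¹ • (Y + Z)))ᵀ * (Y - Z) + Δ := by
  rw [transpose_add, transpose_mul, transpose_smul, transpose_add, hQ.eq, hY.eq, hZ.eq]
  simp only [Matrix.mul_smul, Matrix.smul_mul, mul_add, add_mul, sub_mul, mul_sub, smul_add,
    Matrix.mul_assoc]
  module

section Lyapunov

variable {a b : ℝ} {E B P : ℝ → Matrix ι ι ℝ}
  (hE : ∀ t ∈ Icc a b, (E t).IsHermitian) (hP : ∀ t ∈ Icc a b, (P t).PosSemidef)
  (hEa : (E a).PosSemidef)
  (hderiv : ∀ t ∈ Icc a b, ∀ i j, HasDerivWithinAt (fun s => E s i j)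
    ((-(E t * B t) - (B t)ᵀ * E t + P t) i j) (Icc a b) t)
include hE hP hEa hderiv

theorem lyapunov_exp_perturbation_pos {K : ℝ}
    (hK : ∀ t ∈ Icc a b, ∀ x : ι → ℝ, ‖x‖ = 1 → 0 < 2 * (x ⬝ᵥ B t *ᵥ x) + K * (x ⬝ᵥ x))
    {ε : ℝ} (hε : 0 < ε) :
    ∀ t ∈ Icc a b, ∀ x : ι → ℝ, ‖x‖ = 1 →
      0 < x ⬝ᵥ (E t + (ε * Real.exp (K * (t - a))) • 1) *ᵥ x := by
  set F : ℝ → Matrix ι ι ℝ := fun t => E t + (ε * Real.exp (K * (t - a))) • 1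
  have hFderiv := fun t ht => hasDerivWithinAt_add_exp_smul_one_apply (hderiv t ht) ε K a
  have hFa : ∀ x ∈ Metric.sphere (0 : ι → ℝ) 1, 0 < x ⬝ᵥ F a *ᵥ x := fun x hx => by
    have hEx : 0 ≤ x ⬝ᵥ E a *ᵥ x := by simpa using hEa.dotProduct_mulVec_nonneg x
    have hxx := one_le_dotProduct_self_of_norm_eq_one (mem_sphere_zero_iff_norm.1 hx)
    simp only [F, dotProduct_mulVec_add_smul_one, sub_self, mul_zero, Real.exp_zero, mul_one]
    nlinarith
  by_contra! hneg
  obtain ⟨t, ⟨hat, htb⟩, x, hx, hzero, hnonneg, hbefore⟩ :=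
    (isCompact_sphere 0 1).exists_first_zero (G := fun t x => x ⬝ᵥ F t *ᵥ x)
      ((continuousOn_of_forall_hasDerivWithinAt_apply hFderiv).dotProduct_mulVec_self.mono
        (prod_mono subset_rfl (subset_univ _))) hFa
      (by obtain ⟨t, ht, x, hx, h⟩ := hneg; exact ⟨t, ht, x, mem_sphere_zero_iff_norm.2 hx, h⟩)
  have ht : t ∈ Icc a b := ⟨hat.le, htb⟩
  have hFpsd : (F t).PosSemidef := PosSemidef.of_forall_norm_eq_one
    ((hE t ht).add (isHermitian_one.smul (IsSelfAdjoint.all _)))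
    fun y hy => hnonneg y (mem_sphere_zero_iff_norm.2 hy)
  have hEx : E t *ᵥ x = (-(ε * Real.exp (K * (t - a)))) • x := by
    have hker : F t *ᵥ x = 0 := (hFpsd.dotProduct_mulVec_zero_iff x).1 (by simpa using hzero)
    simp only [F, add_mulVec, smul_mulVec, one_mulVec] at hker
    rw [neg_smul, eq_neg_of_add_eq_zero_left hker]
  have hpos := (isHermitian_iff_isSymm.1 (hE t ht)).dotProduct_lyapunov_mulVec_pos (hP t ht)
    (by positivity) hEx (hK t ht x (mem_sphere_zero_iff_norm.1 hx))
  have hnonpos := ((hasDerivWithinAt_dotProduct_mulVec (hFderiv t ht) x x).mono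
    (Icc_subset_Icc le_rfl htb)).nonpos_of_forall_Ico_le hat
    fun s hs => hzero ▸ (hbefore s hs x hx).le
  exact hpos.not_ge hnonpos

theorem posSemidef_of_hasDerivWithinAt_lyapunov (hB : ContinuousOn B (Icc a b)) :
    ∀ t ∈ Icc a b, (E t).PosSemidef := by
  obtain ⟨C, hC⟩ := isCompact_Icc.exists_bound_dotProduct_mulVec hB
  have hK : ∀ t ∈ Icc a b, ∀ x : ι → ℝ, ‖x‖ = 1 →
      0 < 2 * (x ⬝ᵥ B t *ᵥ x) + (2 * C + 1) * (x ⬝ᵥ x) := fun t ht x hx => by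
    have := one_le_dotProduct_self_of_norm_eq_one hx
    have := abs_le.1 (hC t ht x hx)
    nlinarith
  intro t ht
  refine PosSemidef.of_forall_norm_eq_one (hE t ht) fun x hx => ?_
  set r := Real.exp ((2 * C + 1) * (t - a)) * (x ⬝ᵥ x)
  have hpos : ∀ ε > 0, 0 < x ⬝ᵥ E t *ᵥ x + ε * r := fun ε hε => by
    simpa [dotProduct_mulVec_add_smul_one, r, mul_assoc] using
      lyapunov_exp_perturbation_pos hE hP hEa hderiv hK hε t ht x hx
  have hlim : Tendsto (fun ε => x ⬝ᵥ E t *ᵥ x + ε * r) (𝓝[>] 0) (𝓝 (x ⬝ᵥ E t *ᵥ x)) :=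
    tendsto_nhdsWithin_of_tendsto_nhds
      ((continuous_const.add (continuous_id.mul continuous_const)).tendsto' _ _ (by simp))
  exact ge_of_tendsto hlim (eventually_nhdsWithin_of_forall fun ε hε => (hpos ε hε).le)

end Lyapunov

end Matrix

theorem info_surrogate_optimism_general {n : ℕ} (T : ℝ)
    (A Q : Matrix (Fin n) (Fin n) ℝ) (hQ : Q.PosSemidef)
    (S Δ Yt Ybar : ℝ → Matrix (Fin n) (Fin n) ℝ)
    (hΔpsd : ∀ t ∈ Icc 0 T, (Δ t).PosSemidef)
    (hYtpd : ∀ t ∈ Icc 0 T, (Yt t).PosDef)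
    (hYbarpd : ∀ t ∈ Icc 0 T, (Ybar t).PosDef)
    (hYtode : ∀ t ∈ Icc 0 T, ∀ i j,
      HasDerivWithinAt (fun s => Yt s i j)
        ((-(Yt t * A) - Aᵀ * Yt t - Yt t * Q * Yt t + S t) i j) (Icc 0 T) t)
    (hYbarode : ∀ t ∈ Icc 0 T, ∀ i j,
      HasDerivWithinAt (fun s => Ybar s i j)
        ((-(Ybar t * A) - Aᵀ * Ybar t - Ybar t * Q * Ybar t + S t - Δ t) i j)
        (Icc 0 T) t)
    (hinit : Yt 0 = Ybar 0) :
    ∀ t ∈ Icc 0 T, (Yt t - Ybar t).PosSemidef := by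
  have hYt := continuousOn_of_forall_hasDerivWithinAt_apply hYtode
  have hYbar := continuousOn_of_forall_hasDerivWithinAt_apply hYbarode
  refine posSemidef_of_hasDerivWithinAt_lyapunov
    (B := fun t => A + Q * ((2 : ℝ)⁻¹ • (Yt t + Ybar t)))
    (fun t ht => (hYtpd t ht).1.sub (hYbarpd t ht).1) hΔpsd
    (by rw [hinit, sub_self]; exact .zero) (fun t ht i j => ?_) (by fun_prop)
  rw [← riccati_sub_riccati_eq_lyapunov (S := S t) (isHermitian_iff_isSymm.1 hQ.1)
    (isHermitian_iff_isSymm.1 (hYtpd t ht).1) (isHermitian_iff_isSymm.1 (hYbarpd t ht).1)]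
  exact (hYtode t ht i j).sub (hYbarode t ht i j)

/-- Information-form surrogate optimism: dropping the PSD Jensen-gap term `Δ` from
the Riccati-type information ODE yields an upper bound in the Loewner order.
If `Ỹ' = −ỸA − AᵀỸ − ỸQỸ + S` and `Ȳ' = −ȲA − AᵀȲ − ȲQȲ + S − Δ` with
`Ỹ(0) = Ȳ(0)`, `Q ⪰ 0`, `Δ(t) ⪰ 0`, then `Ỹ(t) ⪰ Ȳ(t)` on `[0,T]`. -/
theorem info_surrogate_optimism {n : ℕ} (T : ℝ) (hT : 0 ≤ T)
    (A Q : Matrix (Fin n) (Fin n) ℝ) (hQ : Q.PosSemidef)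
    (S Δ Yt Ybar : ℝ → Matrix (Fin n) (Fin n) ℝ)
    (hScont : ∀ i j, ContinuousOn (fun t => S t i j) (Icc 0 T))
    (hΔcont : ∀ i j, ContinuousOn (fun t => Δ t i j) (Icc 0 T))
    (hSpsd : ∀ t ∈ Icc 0 T, (S t).PosSemidef)
    (hΔpsd : ∀ t ∈ Icc 0 T, (Δ t).PosSemidef)
    (hYtpd : ∀ t ∈ Icc 0 T, (Yt t).PosDef)
    (hYbarpd : ∀ t ∈ Icc 0 T, (Ybar t).PosDef)
    (hYtode : ∀ t ∈ Icc 0 T, ∀ i j,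
      HasDerivWithinAt (fun s => Yt s i j)
        ((-(Yt t * A) - Aᵀ * Yt t - Yt t * Q * Yt t + S t) i j) (Icc 0 T) t)
    (hYbarode : ∀ t ∈ Icc 0 T, ∀ i j,
      HasDerivWithinAt (fun s => Ybar s i j)
        ((-(Ybar t * A) - Aᵀ * Ybar t - Ybar t * Q * Ybar t + S t - Δ t) i j)
        (Icc 0 T) t)
    (hinit : Yt 0 = Ybar 0) :
    ∀ t ∈ Icc 0 T, (Yt t - Ybar t).PosSemidef :=
  info_surrogate_optimism_general T A Q hQ S Δ Yt Ybar hΔpsd hYtpd hYbarpd hYtode hYbarode hinit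
end
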